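/- arXiv:1405.7254 — 2 statements merged into one kernel-verified Lean document; each statement's English description precedes it below -/
import Mathlib

section
/- Suppose that for every state (z,x,y) the value-iteration sequence converges pointwise, i.e. V_i(z,x,y) → V*(z,x,y) as i → ∞ for some function V*. Then the limiting (optimal long-term expected reward) function is monotonically non-decreasing with respect to the battery level: for every solar state z, channel state x, and battery level y with 1 ≤ y ≤ N_B−1, V*(z,x,y−1) ≤ V*(z,x,y). -/
/-!
On-off energy-harvesting MDP value iteration.
`Va` is the one-step action-value operator, `Viter i` is the `i`-th value-iteration
function `V_i`, and `VIa i a` is the action-value function `V_i^a`.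
-/

/-- The one-step action-value operator:
`Va NB aH pC pQ r lam V a z x y = a·r(x) + λ·Σ_j Σ_l Σ'_q aH(z,j)·pC(x,l)·pQ(z,q)·
V(j, l, min{N_B−1, y−a+q})`. -/
noncomputable def Va {NH NC : ℕ} (NB : ℕ) (aH : Fin NH → Fin NH → ℝ)
    (pC : Fin NC → Fin NC → ℝ) (pQ : Fin NH → ℕ → ℝ) (r : Fin NC → ℝ) (lam : ℝ)
    (V : Fin NH → Fin NC → ℕ → ℝ) (a : ℕ) (z : Fin NH) (x : Fin NC) (y : ℕ) : ℝ :=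
  a * r x + lam * ∑ j : Fin NH, ∑ l : Fin NC,
    ∑' q : ℕ, aH z j * pC x l * pQ z q * V j l (min (NB - 1) (y - a + q))

/-- Value iteration: `V_0 = 0` and `V_{i+1}(z,x,y) = max_{0 ≤ a ≤ min{y,1}} V_{i+1}^a(z,x,y)`. -/
noncomputable def Viter {NH NC : ℕ} (NB : ℕ) (aH : Fin NH → Fin NH → ℝ)
    (pC : Fin NC → Fin NC → ℝ) (pQ : Fin NH → ℕ → ℝ) (r : Fin NC → ℝ) (lam : ℝ) :
    ℕ → Fin NH → Fin NC → ℕ → ℝ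
  | 0 => fun _ _ _ => 0
  | (i + 1) => fun z x y =>
      (Finset.range (min y 1 + 1)).sup' Finset.nonempty_range_add_one
        (fun a => Va NB aH pC pQ r lam (Viter NB aH pC pQ r lam i) a z x y)

/-- Action-value iteration: `V_0^a = 0` and `V_{i+1}^a` is `Va` applied to `V_i`. -/
noncomputable def VIa {NH NC : ℕ} (NB : ℕ) (aH : Fin NH → Fin NH → ℝ)
    (pC : Fin NC → Fin NC → ℝ) (pQ : Fin NH → ℕ → ℝ) (r : Fin NC → ℝ) (lam : ℝ) :
    ℕ → ℕ → Fin NH → Fin NC → ℕ → ℝ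
  | 0 => fun _ _ _ _ => 0
  | (i + 1) => fun a z x y => Va NB aH pC pQ r lam (Viter NB aH pC pQ r lam i) a z x y

/-
Each term of `Va` is a nonnegative weight times `V` at a battery level that is monotone
in `y`, so `Va` preserves monotonicity in the battery level; and a larger battery allows
more actions, so the maximum defining `Viter` runs over a larger set. Hence every `V_i`
is monotone by induction, and the pointwise limit inherits the non-strict inequality.
-/

theorem summable_mul_comp_min {p : ℕ → ℝ} (hp : ∀ q, 0 ≤ p q) (hps : Summable p)
    (g : ℕ → ℝ) (m : ℕ) (k : ℕ → ℕ) : Summable fun q => p q * g (min m (k q)) := by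
  refine Summable.of_norm_bounded (hps.mul_right (∑ i ∈ Finset.range (m + 1), |g i|))
    fun q => ?_
  rw [norm_mul, Real.norm_of_nonneg (hp q), Real.norm_eq_abs]
  gcongr
  · exact hp q
  · exact Finset.single_le_sum (f := fun i => |g i|) (fun i _ => abs_nonneg (g i))
      (Finset.mem_range.mpr (Nat.lt_succ_of_le (min_le_left _ _)))

section Monotone

variable {NH NC : ℕ} (NB : ℕ) {aH : Fin NH → Fin NH → ℝ} {pC : Fin NC → Fin NC → ℝ}
    {pQ : Fin NH → ℕ → ℝ} (r : Fin NC → ℝ) {lam : ℝ}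

theorem Va_monotone
    (haH : ∀ z j, 0 ≤ aH z j) (hpC : ∀ x l, 0 ≤ pC x l)
    (hpQ : ∀ z q, 0 ≤ pQ z q) (hpQsummable : ∀ z, Summable (pQ z)) (hlam0 : 0 ≤ lam)
    {V : Fin NH → Fin NC → ℕ → ℝ} (hV : ∀ j l, Monotone (V j l))
    (a : ℕ) (z : Fin NH) (x : Fin NC) : Monotone (Va NB aH pC pQ r lam V a z x) := by
  intro y y' hy
  have hweight : ∀ j l q, 0 ≤ aH z j * pC x l * pQ z q := fun j l q =>
    mul_nonneg (mul_nonneg (haH z j) (hpC x l)) (hpQ z q)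
  have hsummable : ∀ j l, Summable fun q => aH z j * pC x l * pQ z q :=
    fun j l => (hpQsummable z).mul_left _
  unfold Va
  gcongr with j _ l _ q
  · exact summable_mul_comp_min (hweight j l) (hsummable j l) _ _ _
  · exact summable_mul_comp_min (hweight j l) (hsummable j l) _ _ _
  · exact hweight j l q
  · exact hV j l (by omega)

theorem Viter_monotone
    (haH : ∀ z j, 0 ≤ aH z j) (hpC : ∀ x l, 0 ≤ pC x l)
    (hpQ : ∀ z q, 0 ≤ pQ z q) (hpQsummable : ∀ z, Summable (pQ z)) (hlam0 : 0 ≤ lam)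
    (i : ℕ) (z : Fin NH) (x : Fin NC) :
    Monotone (Viter NB aH pC pQ r lam i z x) := by
  induction i generalizing z x with
  | zero => exact fun _ _ _ => le_rfl
  | succ i ih =>
    intro y y' hy
    have hactions : Finset.range (min y 1 + 1) ⊆ Finset.range (min y' 1 + 1) :=
      Finset.range_subset_range.mpr (by omega)
    calc Viter NB aH pC pQ r lam (i + 1) z x y
        ≤ (Finset.range (min y 1 + 1)).sup' Finset.nonempty_range_add_one
            (fun a => Va NB aH pC pQ r lam (Viter NB aH pC pQ r lam i) a z x y') :=
          Finset.sup'_mono_fun fun a _ =>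
            Va_monotone NB r haH hpC hpQ hpQsummable hlam0 ih a z x hy
      _ ≤ Viter NB aH pC pQ r lam (i + 1) z x y' :=
          Finset.sup'_mono _ hactions _

end Monotone

theorem vstar_monotone_in_battery_general {NH NC : ℕ} (NB : ℕ)
    (aH : Fin NH → Fin NH → ℝ) (pC : Fin NC → Fin NC → ℝ)
    (pQ : Fin NH → ℕ → ℝ) (r : Fin NC → ℝ) (lam : ℝ)
    (haH : ∀ z j, 0 ≤ aH z j)
    (hpC : ∀ x l, 0 ≤ pC x l)
    (hpQ : ∀ z q, 0 ≤ pQ z q) (hpQsummable : ∀ z, Summable (pQ z))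
    (hlam0 : 0 ≤ lam)
    (Vstar : Fin NH → Fin NC → ℕ → ℝ)
    (hconv : ∀ (z : Fin NH) (x : Fin NC) (y : ℕ), y ≤ NB - 1 →
      Filter.Tendsto (fun i => Viter NB aH pC pQ r lam i z x y)
        Filter.atTop (nhds (Vstar z x y))) :
    ∀ (z : Fin NH) (x : Fin NC) (y : ℕ), 1 ≤ y → y ≤ NB - 1 →
      Vstar z x (y - 1) ≤ Vstar z x y := by
  intro z x y hy1 hy2
  exact le_of_tendsto_of_tendsto' (hconv z x (y - 1) (by omega)) (hconv z x y hy2)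
    fun i => Viter_monotone NB r haH hpC hpQ hpQsummable hlam0 i z x (Nat.sub_le y 1)

/-- Theorem 1: if the value-iteration sequence converges pointwise to
`Vstar`, then the limiting optimal long-term expected reward is monotonically
non-decreasing with respect to the battery level. -/
theorem vstar_monotone_in_battery {NH NC : ℕ} (NB : ℕ)
    (hNH : 1 ≤ NH) (hNC : 1 ≤ NC) (hNB : 2 ≤ NB)
    (aH : Fin NH → Fin NH → ℝ) (pC : Fin NC → Fin NC → ℝ)
    (pQ : Fin NH → ℕ → ℝ) (r : Fin NC → ℝ) (lam : ℝ)
    (haH : ∀ z j, 0 ≤ aH z j) (haHsum : ∀ z, ∑ j, aH z j = 1)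
    (hpC : ∀ x l, 0 ≤ pC x l) (hpCsum : ∀ x, ∑ l, pC x l = 1)
    (hpQ : ∀ z q, 0 ≤ pQ z q) (hpQsummable : ∀ z, Summable (pQ z))
    (hpQsum : ∀ z, (∑' q, pQ z q) = 1)
    (hr : ∀ x, 0 ≤ r x) (hlam0 : 0 ≤ lam) (hlam1 : lam ≤ 1)
    (Vstar : Fin NH → Fin NC → ℕ → ℝ)
    (hconv : ∀ (z : Fin NH) (x : Fin NC) (y : ℕ), y ≤ NB - 1 →
      Filter.Tendsto (fun i => Viter NB aH pC pQ r lam i z x y)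
        Filter.atTop (nhds (Vstar z x y))) :
    ∀ (z : Fin NH) (x : Fin NC) (y : ℕ), 1 ≤ y → y ≤ NB - 1 →
      Vstar z x (y - 1) ≤ Vstar z x y :=
  vstar_monotone_in_battery_general NB aH pC pQ r lam haH hpC hpQ hpQsummable hlam0 Vstar hconv
end

section
/- For every iteration index i ≥ 0, every solar state z, and every channel state x, the difference function Θ_i(z,x,·) is monotonically non-decreasing on {1,…,N_B−1} (i.e. Θ_i(z,x,y) ≤ Θ_i(z,x,y+1) for all 1 ≤ y ≤ N_B−2). Consequently, the optimal on-off transmission policy at iteration i has a threshold structure: for each (z,x) there exists a threshold κ ∈ {0,…,N_B−1} such that Θ_i(z,x,y) < 0 for all y with 1 ≤ y ≤ κ and Θ_i(z,x,y) ≥ 0 for all y with κ+1 ≤ y ≤ N_B−1. -/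
/-- The difference function `Θ_i(z,x,y) = V_i^1(z,x,y) − V_i^0(z,x,y)`. -/
noncomputable def Theta {NH NC : ℕ} (NB : ℕ) (aH : Fin NH → Fin NH → ℝ)
    (pC : Fin NC → Fin NC → ℝ) (pQ : Fin NH → ℕ → ℝ) (r : Fin NC → ℝ) (lam : ℝ)
    (i : ℕ) (z : Fin NH) (x : Fin NC) (y : ℕ) : ℝ :=
  VIa NB aH pC pQ r lam i 1 z x y - VIa NB aH pC pQ r lam i 0 z x y

/-- The difference function
`Λ_i(z,x,y) = Σ_j Σ_l Σ'_q aH(z,j)·pC(x,l)·pQ(z,q)·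
( V_i^1(j,l,min{N_B−1,y+q}) − V_i^0(j,l,min{N_B−1,y−1+q}) )`. -/
noncomputable def Lambda {NH NC : ℕ} (NB : ℕ) (aH : Fin NH → Fin NH → ℝ)
    (pC : Fin NC → Fin NC → ℝ) (pQ : Fin NH → ℕ → ℝ) (r : Fin NC → ℝ) (lam : ℝ)
    (i : ℕ) (z : Fin NH) (x : Fin NC) (y : ℕ) : ℝ :=
  ∑ j : Fin NH, ∑ l : Fin NC, ∑' q : ℕ,
    aH z j * pC x l * pQ z q *
      (VIa NB aH pC pQ r lam i 1 j l (min (NB - 1) (y + q)) -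
        VIa NB aH pC pQ r lam i 0 j l (min (NB - 1) (y - 1 + q)))

/-!
Let `S_i(z,x,n) = Σ_j Σ_l Σ_q aH(z,j)·pC(x,l)·pQ(z,q)·V_i(j,l,min{N_B−1,n+q})`, so that
`V_{i+1}^a(z,x,y) = a·r(x) + λ·S_i(z,x,y−a)` and `Θ_{i+1}(z,x,n+1) = r(x) − λ·Δ S_i(z,x,n)`.
Hence `Θ_{i+1}(z,x,·)` is non-decreasing on `{1, 2, …}` as soon as `S_i(z,x,·)` is concave, i.e.
has antitone forward differences `Δ_[1]`. By induction on `i`, every `n ↦ V_i(z,x,min{N_B−1,n})`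
is non-decreasing and concave: nonnegative combinations of shifts of such functions are again
such, `V_{i+1}(n+1) = max(λ·S_i(n+1), r(x) + λ·S_i(n))` inherits both properties from `λ·S_i`,
and capping at `N_B − 1` preserves them. A function non-decreasing on `{1, 2, …}` changes sign
at most once there, which is the threshold.
-/

open Finset fwdDiff

section ShiftedSeries

variable {w g : ℕ → ℝ}

lemma summable_mul_comp_add (hw : Summable w) (hg : ∃ C, ∀ m, |g m| ≤ C) (n : ℕ) :
    Summable fun q => w q * g (n + q) := by
  obtain ⟨C, hC⟩ := hg
  refine (hw.abs.mul_right C).of_norm_bounded fun q => ?_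
  rw [Real.norm_eq_abs, abs_mul]
  exact mul_le_mul_of_nonneg_left (hC _) (abs_nonneg _)

lemma fwdDiff_tsum_mul_comp_add (hw : Summable w) (hg : ∃ C, ∀ m, |g m| ≤ C) (n : ℕ) :
    Δ_[1] (fun n => ∑' q, w q * g (n + q)) n = ∑' q, w q * Δ_[1] g (n + q) := by
  simp only [fwdDiff, mul_sub]
  rw [← Summable.tsum_sub (summable_mul_comp_add hw hg _) (summable_mul_comp_add hw hg _)]
  simp only [add_right_comm n 1]

lemma exists_abs_fwdDiff_le (hg : ∃ C, ∀ m, |g m| ≤ C) : ∃ C, ∀ m, |Δ_[1] g m| ≤ C := by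
  obtain ⟨C, hC⟩ := hg
  exact ⟨C + C, fun m => (abs_sub _ _).trans (add_le_add (hC _) (hC _))⟩

lemma exists_abs_comp_min_le (f : ℕ → ℝ) (K : ℕ) : ∃ C, ∀ m, |f (min K m)| ≤ C :=
  ⟨∑ k ∈ range (K + 1), |f k|, fun m =>
    single_le_sum (fun k _ => abs_nonneg (f k)) (mem_range.2 (by omega))⟩

end ShiftedSeries

section DiscreteConcavity

variable {f g : ℕ → ℝ}

lemma monotone_iff_fwdDiff_nonneg : Monotone f ↔ ∀ n, 0 ≤ Δ_[1] f n :=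
  ⟨fun h n => sub_nonneg.2 (h n.le_succ),
    fun h => monotone_nat_of_le_succ fun n => sub_nonneg.1 (h n)⟩

lemma monotone_concave_of_eq_max_shift {G : ℕ → ℝ} (c : ℝ) (hf : Monotone f)
    (hf' : Antitone (Δ_[1] f)) (hG0 : G 0 = f 0)
    (hG : ∀ n, G (n + 1) = max (f (n + 1)) (c + f n)) :
    Monotone G ∧ Antitone (Δ_[1] G) := by
  have hconc : ∀ k, f (k + 2) + f k ≤ 2 * f (k + 1) := fun k => by
    have := hf' k.le_succ
    simp only [fwdDiff] at this
    linarith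
  refine ⟨monotone_nat_of_le_succ fun n => ?_, antitone_nat_of_succ_le fun n => ?_⟩
  · cases n with
    | zero => rw [hG0, hG]; exact le_max_of_le_left (hf zero_le_one)
    | succ n =>
      rw [hG, hG]
      exact max_le_max (hf n.succ.le_succ) ((add_le_add_iff_left c).2 (hf n.le_succ))
  · simp only [fwdDiff]
    cases n with
    | zero =>
      rw [hG0, hG, hG]
      have h₁ := le_max_left (f 1) (c + f 0)
      have h₂ := le_max_right (f 1) (c + f 0)
      rcases max_cases (f 2) (c + f 1) with ⟨h, -⟩ | ⟨h, -⟩ <;> rw [h] <;> linarith [hconc 0]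
    | succ n =>
      rw [hG, hG, hG]
      have h₁ := le_max_left (f (n + 2)) (c + f (n + 1))
      have h₂ := le_max_right (f (n + 2)) (c + f (n + 1))
      rcases max_cases (f (n + 1)) (c + f n) with ⟨h, -⟩ | ⟨h, -⟩ <;> rw [h] <;>
        rcases max_cases (f (n + 3)) (c + f (n + 2)) with ⟨h', -⟩ | ⟨h', -⟩ <;> rw [h'] <;>
        linarith [hconc n, hconc (n + 1)]

lemma fwdDiff_comp_min (K n : ℕ) :
    Δ_[1] (fun m => g (min K m)) n = if n < K then Δ_[1] g n else 0 := by
  simp only [fwdDiff]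
  split_ifs with h
  · rw [min_eq_right h.le, min_eq_right h]
  · rw [min_eq_left (by omega), min_eq_left (by omega), sub_self]

lemma antitone_fwdDiff_comp_min (hg : Monotone g) (hg' : Antitone (Δ_[1] g)) (K : ℕ) :
    Antitone (Δ_[1] fun m => g (min K m)) := by
  refine antitone_nat_of_succ_le fun n => ?_
  simp only [fwdDiff_comp_min]
  split_ifs with h₁ h₂ h₂
  · exact hg' n.le_succ
  · omega
  · exact monotone_iff_fwdDiff_nonneg.1 hg n
  · rfl

theorem exists_threshold_of_monotone_succ (hf : Monotone fun n => f (n + 1)) (N : ℕ) :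
    ∃ κ ≤ N, (∀ y, 1 ≤ y → y ≤ κ → f y < 0) ∧ (∀ y, κ + 1 ≤ y → y ≤ N → 0 ≤ f y) := by
  classical
  have hle : ∀ {y y'}, 1 ≤ y → y ≤ y' → f y ≤ f y' := fun {y y'} hy hyy' => by
    obtain ⟨n, rfl⟩ := Nat.exists_eq_add_of_le' hy
    obtain ⟨n', rfl⟩ := Nat.exists_eq_add_of_le' (hy.trans hyy')
    exact hf (by omega)
  refine ⟨Nat.findGreatest (fun k => f k < 0) N, Nat.findGreatest_le N, fun y hy hyκ => ?_,
    fun y hκy hyN => ?_⟩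
  · exact (hle hy hyκ).trans_lt
      (Nat.findGreatest_of_ne_zero (P := fun k => f k < 0) rfl (by omega))
  · by_contra hneg
    have := Nat.le_findGreatest (P := fun k => f k < 0) hyN (not_le.1 hneg)
    omega

end DiscreteConcavity

section ValueIteration

variable {NH NC : ℕ} (NB : ℕ) (aH : Fin NH → Fin NH → ℝ) (pC : Fin NC → Fin NC → ℝ)
  (pQ : Fin NH → ℕ → ℝ) (r : Fin NC → ℝ) (lam : ℝ)

noncomputable def continuationValue (U : Fin NH → Fin NC → ℕ → ℝ) (z : Fin NH) (x : Fin NC)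
    (n : ℕ) : ℝ :=
  ∑ j, ∑ l, ∑' q, aH z j * pC x l * pQ z q * U j l (min (NB - 1) (n + q))

lemma Va_eq_continuationValue (V : Fin NH → Fin NC → ℕ → ℝ) (a : ℕ) (z : Fin NH) (x : Fin NC)
    (y : ℕ) :
    Va NB aH pC pQ r lam V a z x y =
      a * r x + lam * continuationValue NB aH pC pQ V z x (y - a) :=
  rfl

lemma fwdDiff_continuationValue (hpQs : ∀ z, Summable (pQ z)) (U : Fin NH → Fin NC → ℕ → ℝ)
    (z : Fin NH) (x : Fin NC) (n : ℕ) :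
    Δ_[1] (continuationValue NB aH pC pQ U z x) n =
      ∑ j, ∑ l, ∑' q,
        aH z j * pC x l * pQ z q * Δ_[1] (fun m => U j l (min (NB - 1) m)) (n + q) := by
  simp only [fwdDiff, continuationValue, ← sum_sub_distrib]
  refine sum_congr rfl fun j _ => sum_congr rfl fun l _ => ?_
  exact fwdDiff_tsum_mul_comp_add ((hpQs z).mul_left _) (exists_abs_comp_min_le _ _) n

variable {aH pC pQ}

lemma monotone_continuationValue (haH : ∀ z j, 0 ≤ aH z j) (hpC : ∀ x l, 0 ≤ pC x l)
    (hpQ : ∀ z q, 0 ≤ pQ z q) (hpQs : ∀ z, Summable (pQ z)) {U : Fin NH → Fin NC → ℕ → ℝ}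
    (hU : ∀ j l, Monotone fun m => U j l (min (NB - 1) m)) (z : Fin NH) (x : Fin NC) :
    Monotone (continuationValue NB aH pC pQ U z x) :=
  monotone_iff_fwdDiff_nonneg.2 fun n => by
    rw [fwdDiff_continuationValue NB aH pC pQ hpQs]
    exact sum_nonneg fun j _ => sum_nonneg fun l _ => tsum_nonneg fun q =>
      mul_nonneg (mul_nonneg (mul_nonneg (haH z j) (hpC x l)) (hpQ z q))
        (monotone_iff_fwdDiff_nonneg.1 (hU j l) _)

lemma antitone_fwdDiff_continuationValue (haH : ∀ z j, 0 ≤ aH z j) (hpC : ∀ x l, 0 ≤ pC x l)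
    (hpQ : ∀ z q, 0 ≤ pQ z q) (hpQs : ∀ z, Summable (pQ z)) {U : Fin NH → Fin NC → ℕ → ℝ}
    (hU : ∀ j l, Antitone (Δ_[1] fun m => U j l (min (NB - 1) m))) (z : Fin NH) (x : Fin NC) :
    Antitone (Δ_[1] (continuationValue NB aH pC pQ U z x)) := fun m n hmn => by
  rw [fwdDiff_continuationValue NB aH pC pQ hpQs, fwdDiff_continuationValue NB aH pC pQ hpQs]
  have hsum := fun j l k => summable_mul_comp_add ((hpQs z).mul_left (aH z j * pC x l))
    (exists_abs_fwdDiff_le (exists_abs_comp_min_le (U j l) (NB - 1))) k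
  exact sum_le_sum fun j _ => sum_le_sum fun l _ =>
    (hsum j l n).tsum_le_tsum (fun q => mul_le_mul_of_nonneg_left (hU j l (by omega))
      (mul_nonneg (mul_nonneg (haH z j) (hpC x l)) (hpQ z q))) (hsum j l m)

variable (aH pC pQ)

lemma Viter_succ_zero (i : ℕ) (z : Fin NH) (x : Fin NC) :
    Viter NB aH pC pQ r lam (i + 1) z x 0 =
      lam * continuationValue NB aH pC pQ (Viter NB aH pC pQ r lam i) z x 0 := by
  simp [Viter, Va_eq_continuationValue]

lemma Viter_succ_succ (i : ℕ) (z : Fin NH) (x : Fin NC) (n : ℕ) :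
    Viter NB aH pC pQ r lam (i + 1) z x (n + 1) =
      max (lam * continuationValue NB aH pC pQ (Viter NB aH pC pQ r lam i) z x (n + 1))
        (r x + lam * continuationValue NB aH pC pQ (Viter NB aH pC pQ r lam i) z x n) := by
  simp [Viter, Va_eq_continuationValue, show range 2 = {0, 1} by decide]

lemma Theta_succ_succ (i : ℕ) (z : Fin NH) (x : Fin NC) (n : ℕ) :
    Theta NB aH pC pQ r lam (i + 1) z x (n + 1) =
      r x - lam * Δ_[1] (continuationValue NB aH pC pQ (Viter NB aH pC pQ r lam i) z x) n := by
  simp only [Theta, VIa, Va_eq_continuationValue, fwdDiff]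
  push_cast
  ring

variable {aH pC pQ}

theorem monotone_concave_Viter_comp_min (haH : ∀ z j, 0 ≤ aH z j) (hpC : ∀ x l, 0 ≤ pC x l)
    (hpQ : ∀ z q, 0 ≤ pQ z q) (hpQs : ∀ z, Summable (pQ z)) (hlam0 : 0 ≤ lam) (i : ℕ)
    (z : Fin NH) (x : Fin NC) :
    Monotone (fun m => Viter NB aH pC pQ r lam i z x (min (NB - 1) m)) ∧
      Antitone (Δ_[1] fun m => Viter NB aH pC pQ r lam i z x (min (NB - 1) m)) := by
  induction i generalizing z x with
  | zero => simp [Viter, monotone_const, antitone_const]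
  | succ i ih =>
    set S := continuationValue NB aH pC pQ (Viter NB aH pC pQ r lam i) z x
    have hS : Monotone S :=
      monotone_continuationValue NB haH hpC hpQ hpQs (fun j l => (ih j l).1) z x
    have hS' : Antitone (Δ_[1] S) :=
      antitone_fwdDiff_continuationValue NB haH hpC hpQ hpQs (fun j l => (ih j l).2) z x
    have hlamS' : Antitone (Δ_[1] fun n => lam * S n) := by
      rw [show (fun n => lam * S n) = lam • S from rfl, fwdDiff_const_smul]
      exact hS'.const_mul hlam0
    obtain ⟨hV, hV'⟩ := monotone_concave_of_eq_max_shift (r x) (hS.const_mul hlam0) hlamS'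
      (Viter_succ_zero NB aH pC pQ r lam i z x) (Viter_succ_succ NB aH pC pQ r lam i z x)
    exact ⟨fun a b h => hV (min_le_min_left _ h), antitone_fwdDiff_comp_min hV hV' _⟩

theorem monotone_Theta_succ (haH : ∀ z j, 0 ≤ aH z j) (hpC : ∀ x l, 0 ≤ pC x l)
    (hpQ : ∀ z q, 0 ≤ pQ z q) (hpQs : ∀ z, Summable (pQ z)) (hlam0 : 0 ≤ lam) (i : ℕ)
    (z : Fin NH) (x : Fin NC) : Monotone fun n => Theta NB aH pC pQ r lam i z x (n + 1) := by
  cases i with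
  | zero => simp [Theta, VIa, monotone_const]
  | succ i =>
    have hS' := antitone_fwdDiff_continuationValue NB haH hpC hpQ hpQs
      (fun j l => (monotone_concave_Viter_comp_min NB r lam haH hpC hpQ hpQs hlam0 i j l).2) z x
    simp only [Theta_succ_succ]
    exact fun m n h => sub_le_sub_left (mul_le_mul_of_nonneg_left (hS' h) hlam0) _

end ValueIteration

theorem theta_monotone_and_threshold_structure_general {NH NC : ℕ} (NB : ℕ)
    (aH : Fin NH → Fin NH → ℝ) (pC : Fin NC → Fin NC → ℝ)
    (pQ : Fin NH → ℕ → ℝ) (r : Fin NC → ℝ) (lam : ℝ)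
    (haH : ∀ z j, 0 ≤ aH z j) (hpC : ∀ x l, 0 ≤ pC x l)
    (hpQ : ∀ z q, 0 ≤ pQ z q) (hpQsummable : ∀ z, Summable (pQ z)) (hlam0 : 0 ≤ lam) :
    (∀ (i : ℕ) (z : Fin NH) (x : Fin NC) (y : ℕ), 1 ≤ y → y ≤ NB - 2 →
      Theta NB aH pC pQ r lam i z x y ≤ Theta NB aH pC pQ r lam i z x (y + 1)) ∧
    ∀ (i : ℕ) (z : Fin NH) (x : Fin NC), ∃ κ : ℕ, κ ≤ NB - 1 ∧
      (∀ y : ℕ, 1 ≤ y → y ≤ κ → Theta NB aH pC pQ r lam i z x y < 0) ∧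
      (∀ y : ℕ, κ + 1 ≤ y → y ≤ NB - 1 → 0 ≤ Theta NB aH pC pQ r lam i z x y) := by
  have hΘ := monotone_Theta_succ NB r lam haH hpC hpQ hpQsummable hlam0
  refine ⟨fun i z x y hy _ => ?_,
    fun i z x => exists_threshold_of_monotone_succ (hΘ i z x) (NB - 1)⟩
  obtain ⟨n, rfl⟩ := Nat.exists_eq_add_of_le' hy
  exact hΘ i z x n.le_succ

/-- Theorem 2: for every iteration index `i`, the difference function
`Θ_i(z,x,·)` is monotonically non-decreasing on `{1,…,N_B−1}`; consequently the optimal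
on-off transmission policy at iteration `i` has a threshold structure in the battery
level. -/
theorem theta_monotone_and_threshold_structure {NH NC : ℕ} (NB : ℕ)
    (hNH : 1 ≤ NH) (hNC : 1 ≤ NC) (hNB : 2 ≤ NB)
    (aH : Fin NH → Fin NH → ℝ) (pC : Fin NC → Fin NC → ℝ)
    (pQ : Fin NH → ℕ → ℝ) (r : Fin NC → ℝ) (lam : ℝ)
    (haH : ∀ z j, 0 ≤ aH z j) (haHsum : ∀ z, ∑ j, aH z j = 1)
    (hpC : ∀ x l, 0 ≤ pC x l) (hpCsum : ∀ x, ∑ l, pC x l = 1)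
    (hpQ : ∀ z q, 0 ≤ pQ z q) (hpQsummable : ∀ z, Summable (pQ z))
    (hpQsum : ∀ z, (∑' q, pQ z q) = 1)
    (hr : ∀ x, 0 ≤ r x) (hlam0 : 0 ≤ lam) (hlam1 : lam ≤ 1) :
    (∀ (i : ℕ) (z : Fin NH) (x : Fin NC) (y : ℕ), 1 ≤ y → y ≤ NB - 2 →
      Theta NB aH pC pQ r lam i z x y ≤ Theta NB aH pC pQ r lam i z x (y + 1)) ∧
    ∀ (i : ℕ) (z : Fin NH) (x : Fin NC), ∃ κ : ℕ, κ ≤ NB - 1 ∧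
      (∀ y : ℕ, 1 ≤ y → y ≤ κ → Theta NB aH pC pQ r lam i z x y < 0) ∧
      (∀ y : ℕ, κ + 1 ≤ y → y ≤ NB - 1 → 0 ≤ Theta NB aH pC pQ r lam i z x y) :=
  theta_monotone_and_threshold_structure_general NB aH pC pQ r lam haH hpC hpQ hpQsummable hlam0
end
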